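/- Let u̇ = f(u) on [0,T], let U be differentiable with residual R = U̇ − f(U), and let z solve the dual problem −ż(t) = Ā(t)ᵀ z(t) on [0,T) with z(T) = z_T, where Ā(t) = ∫₀¹ Df(sU(t)+(1−s)u(t)) ds. Then ⟨z_T, U(T) − u(T)⟩ = ⟨z(0), U(0) − u(0)⟩ + ∫₀ᵀ ⟨z(t), R(t)⟩ dt. -/

import Mathlib

/-!
The error `e = U - u` satisfies `ė = Ā e + R`, since by the fundamental theorem of calculus along
the segment from `u(t)` to `U(t)` the averaged Jacobian `Ā(t)` maps `e(t)` to `f(U(t)) - f(u(t))`.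
Against a solution of the dual equation `-ż = Āᵀ z` the linear terms cancel, so
`d/dt ⟨z, e⟩ = ⟨z, R⟩`, and integrating over `[0, T]` gives the formula.
-/

open intervalIntegral

local notation "⟪" x ", " y "⟫" => inner (𝕜 := ℝ) x y

theorem integral_fderiv_segment_apply {E F : Type*} [NormedAddCommGroup E] [NormedSpace ℝ E]
    [NormedAddCommGroup F] [NormedSpace ℝ F] [CompleteSpace F] {f : E → F}
    (hf : ContDiff ℝ 1 f) (a b : E) :
    (∫ s in (0 : ℝ)..1, fderiv ℝ f (s • b + (1 - s) • a)) (b - a) = f b - f a := by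
  set γ : ℝ → E := fun s => s • b + (1 - s) • a
  have hγ : ∀ s : ℝ, HasDerivAt γ (b - a) s := fun s =>
    (((hasDerivAt_id s).smul_const b).add
      (((hasDerivAt_id s).const_sub 1).smul_const a)).congr_deriv (by simp [sub_eq_add_neg])
  have hDfγ : Continuous fun s => fderiv ℝ f (γ s) :=
    (hf.continuous_fderiv one_ne_zero).comp (by fun_prop)
  have hfγ : ∀ s ∈ Set.uIcc (0 : ℝ) 1,
      HasDerivAt (fun s => f (γ s)) (fderiv ℝ f (γ s) (b - a)) s := fun s _ =>
    ((hf.differentiable one_ne_zero).differentiableAt.hasFDerivAt).comp_hasDerivAt s (hγ s)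
  rw [ContinuousLinearMap.intervalIntegral_apply (hDfγ.intervalIntegrable 0 1),
    integral_eq_sub_of_hasDerivAt hfγ ((hDfγ.clm_apply continuous_const).intervalIntegrable 0 1)]
  simp [γ]

theorem HasDerivAt.inner_of_neg_adjoint {E : Type*} [NormedAddCommGroup E]
    [InnerProductSpace ℝ E] [CompleteSpace E] {z e : ℝ → E} {A : E →L[ℝ] E} {r : E} {t : ℝ}
    (hz : HasDerivAt z (-(A.adjoint (z t))) t) (he : HasDerivAt e (A (e t) + r) t) :
    HasDerivAt (fun t => ⟪z t, e t⟫) ⟪z t, r⟫ t := by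
  have h := hz.inner ℝ he
  rw [inner_add_right, inner_neg_left, ContinuousLinearMap.adjoint_inner_left] at h
  exact h.congr_deriv (by ring)

theorem error_representation_general (n : ℕ) (T : ℝ) (hT : 0 ≤ T)
    (f : EuclideanSpace ℝ (Fin n) → EuclideanSpace ℝ (Fin n))
    (hf : ContDiff ℝ 1 f)
    (u U R z : ℝ → EuclideanSpace ℝ (Fin n))
    (zT : EuclideanSpace ℝ (Fin n))
    (hu : ∀ t ∈ Set.Icc 0 T, HasDerivAt u (f (u t)) t)
    (hU : ∀ t ∈ Set.Icc 0 T, HasDerivAt U (f (U t) + R t) t)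
    (hzT : z T = zT)
    (hz : ∀ t ∈ Set.Icc 0 T,
      HasDerivAt z
        (-(ContinuousLinearMap.adjoint
            (∫ s in (0 : ℝ)..1, fderiv ℝ f (s • U t + (1 - s) • u t)) (z t))) t)
    (hRc : ContinuousOn R (Set.Icc 0 T)) :
    ⟪zT, U T - u T⟫ = ⟪z 0, U 0 - u 0⟫ + ∫ t in (0 : ℝ)..T, ⟪z t, R t⟫ := by
  rw [← Set.uIcc_of_le hT] at hu hU hz hRc
  have hzc : ContinuousOn z (Set.uIcc 0 T) := fun t ht => (hz t ht).continuousAt.continuousWithinAt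
  have hdual : ∀ t ∈ Set.uIcc 0 T,
      HasDerivAt (fun t => ⟪z t, U t - u t⟫) ⟪z t, R t⟫ t := fun t ht => by
    refine (hz t ht).inner_of_neg_adjoint ?_
    rw [integral_fderiv_segment_apply hf]
    exact ((hU t ht).sub (hu t ht)).congr_deriv (by abel)
  rw [integral_eq_sub_of_hasDerivAt hdual (hzc.inner hRc).intervalIntegrable, hzT]
  ring

/-- Error representation formula: if u̇ = f(u), U has residual R = U̇ − f(U),
and z solves the dual problem −ż = Ā(t)ᵀz with z(T) = z_T, where
Ā(t) = ∫₀¹ Df(sU(t)+(1−s)u(t)) ds, then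
⟨z_T, U(T) − u(T)⟩ = ⟨z(0), U(0) − u(0)⟩ + ∫₀ᵀ ⟨z, R⟩ dt. -/
theorem error_representation (n : ℕ) (T : ℝ) (hT : 0 ≤ T)
    (f : EuclideanSpace ℝ (Fin n) → EuclideanSpace ℝ (Fin n))
    (hf : ContDiff ℝ 1 f)
    (u U R z : ℝ → EuclideanSpace ℝ (Fin n))
    (zT : EuclideanSpace ℝ (Fin n))
    (hu : ∀ t ∈ Set.Icc 0 T, HasDerivAt u (f (u t)) t)
    (hU : ∀ t ∈ Set.Icc 0 T, HasDerivAt U (f (U t) + R t) t)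
    (hzT : z T = zT)
    (hz : ∀ t ∈ Set.Icc 0 T,
      HasDerivAt z
        (-(ContinuousLinearMap.adjoint
            (∫ s in (0 : ℝ)..1, fderiv ℝ f (s • U t + (1 - s) • u t)) (z t))) t)
    (hRc : ContinuousOn R (Set.Icc 0 T)) (hzc : ContinuousOn z (Set.Icc 0 T)) :
    ⟪zT, U T - u T⟫ = ⟪z 0, U 0 - u 0⟫ + ∫ t in (0 : ℝ)..T, ⟪z t, R t⟫ :=
  error_representation_general n T hT f hf u U R z zT hu hU hzT hz hRc
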